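/- Let k ≥ 1, let 0 ≤ i ≤ k−1, and let j satisfy 0 ≤ j < (3^{k−i} + 1)/2 − 1. Then for every u ∈ S(i,j) and every v ∈ S(i,j+1), the difference v − u satisfies 3^i + 1 ≤ v − u ≤ 3^{i+1} − 1. In particular, for distinct levels i ≠ i′ these ranges of differences are disjoint. -/
import Mathlib


/-- The recursively defined vertex sets `S(i,j)`:
`S(0,j) = {2j}` and `S(i+1,m) = S(i,3m) ∪ S(i,3m+1)`. -/
def Sset : ℕ → ℕ → Finset ℕ
  | 0, j => {2 * j}
  | i + 1, m => Sset i (3 * m) ∪ Sset i (3 * m + 1)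

lemma Sset_bounds : ∀ i j u, u ∈ Sset i j →
    2 * 3 ^ i * j ≤ u ∧ u + 1 ≤ 2 * 3 ^ i * j + 3 ^ i := by
  intro i
  induction i with
  | zero =>
    intro j u hu
    simp [Sset] at hu
    omega
  | succ i ih =>
    intro j u hu
    simp only [Sset, Finset.mem_union] at hu
    have h3 : (3:ℕ) ^ (i+1) = 3 ^ i * 3 := pow_succ 3 i
    have e1 : 2 * 3 ^ i * (3 * j) = 2 * 3 ^ (i+1) * j := by rw [h3]; ring
    have e2 : 2 * 3 ^ i * (3 * j + 1) = 2 * 3 ^ (i+1) * j + 2 * 3 ^ i := by rw [h3]; ring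
    rcases hu with h | h
    · have := ih (3 * j) u h
      omega
    · have := ih (3 * j + 1) u h
      omega

/-- Let `k ≥ 1`.  For every level `0 ≤ i ≤ k−1` and every `j` with
`0 ≤ j < (3^(k−i) + 1)/2 − 1`, for every `u ∈ S(i,j)` and every `v ∈ S(i,j+1)` the
difference `v − u` satisfies `3^i + 1 ≤ v − u ≤ 3^(i+1) − 1`.  In particular, for
distinct levels `i ≠ i′` these ranges of differences are disjoint. -/
theorem stmt_6 (k : ℕ) (hk : 1 ≤ k) :
    (∀ i : ℕ, i ≤ k - 1 → ∀ j : ℕ, j + 1 < (3 ^ (k - i) + 1) / 2 →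
      ∀ u ∈ Sset i j, ∀ v ∈ Sset i (j + 1),
        3 ^ i + 1 ≤ v - u ∧ v - u ≤ 3 ^ (i + 1) - 1) ∧
    (∀ i : ℕ, i ≤ k - 1 → ∀ i' : ℕ, i' ≤ k - 1 → i ≠ i' →
      Disjoint (Finset.Icc (3 ^ i + 1) (3 ^ (i + 1) - 1))
               (Finset.Icc (3 ^ i' + 1) (3 ^ (i' + 1) - 1))) := by
  constructor
  · intro i _ j _ u hu v hv
    have h1 := Sset_bounds i j u hu
    have h2 := Sset_bounds i (j + 1) v hv
    have h3 : (3:ℕ) ^ (i+1) = 3 ^ i * 3 := pow_succ 3 i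
    have hp : 1 ≤ (3:ℕ) ^ i := Nat.one_le_pow _ _ (by norm_num)
    have e : 2 * 3 ^ i * (j + 1) = 2 * 3 ^ i * j + 2 * 3 ^ i := by ring
    omega
  · intro i _ i' _ hne
    have key : ∀ a b : ℕ, a < b →
        Disjoint (Finset.Icc (3 ^ a + 1) (3 ^ (a + 1) - 1))
                 (Finset.Icc (3 ^ b + 1) (3 ^ (b + 1) - 1)) := by
      intro a b hab
      rw [Finset.disjoint_left]
      simp only [Finset.mem_Icc]
      intro x hx hx'
      have : (3:ℕ) ^ (a + 1) ≤ 3 ^ b := Nat.pow_le_pow_right (by norm_num) hab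
      have hp : 1 ≤ (3:ℕ) ^ b := Nat.one_le_pow _ _ (by norm_num)
      omega
    rcases lt_or_gt_of_ne hne with h | h
    · exact key i i' h
    · exact (key i' i h).symm
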